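/- There is no odd deficient-perfect number of the form n = 3^{α1} · 11^{α2} · q^{α3} · p^{α4}, where q and p are primes with 11 < q < p, and α1, α2, α3, α4 are positive integers. That is, no such n admits a proper divisor d with σ(n) = 2n - d. -/

import Mathlib

open Finset

private def sgeo (r m : ℕ) : ℕ := ∑ i ∈ Finset.range (m + 1), r ^ i

private lemma sgeo_succ (r m : ℕ) : sgeo r (m + 1) = sgeo r m + r ^ (m + 1) :=
  Finset.sum_range_succ _ _

private lemma sgeo_pos (r m : ℕ) : 0 < sgeo r m := by
  induction m with
  | zero => simp [sgeo]
  | succ m ih => rw [sgeo_succ]; omega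

private lemma sgeo_key (s m : ℕ) : s * sgeo (s + 1) m + 1 = (s + 1) ^ (m + 1) := by
  induction m with
  | zero => simp [sgeo]
  | succ m ih =>
    rw [sgeo_succ, Nat.mul_add, add_right_comm, ih, pow_succ, pow_succ]
    ring

private lemma sgeo_sub_one (r m : ℕ) (hr : 1 ≤ r) : (r - 1) * sgeo r m + 1 = r ^ (m + 1) := by
  obtain ⟨s, rfl⟩ : ∃ s, r = s + 1 := ⟨r - 1, by omega⟩
  simpa using sgeo_key s m

private lemma sgeo_le (r m : ℕ) : r ^ m ≤ sgeo r m := by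
  cases m with
  | zero => simp [sgeo]
  | succ m => rw [sgeo_succ]; omega

private lemma sgeo_three_le (r m : ℕ) (hm : 2 ≤ m) :
    r ^ (m - 2) * (1 + r + r ^ 2) ≤ sgeo r m := by
  obtain ⟨u, rfl⟩ : ∃ u, m = u + 2 := ⟨m - 2, by omega⟩
  have h1 : r ^ u ≤ sgeo r u := sgeo_le r u
  have h2 : sgeo r (u + 2) = sgeo r u + r ^ (u + 1) + r ^ (u + 2) := by
    rw [show u + 2 = (u + 1) + 1 from rfl, sgeo_succ, sgeo_succ]
  have h3 : r ^ (u + 2 - 2) * (1 + r + r ^ 2) = r ^ u + r ^ (u + 1) + r ^ (u + 2) := by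
    simp only [Nat.add_sub_cancel]
    ring
  rw [h3, h2]
  omega

private lemma sgeo_mod_two (r m : ℕ) (hr : r % 2 = 1) : sgeo r m % 2 = (m + 1) % 2 := by
  induction m with
  | zero => norm_num [sgeo]
  | succ m ih =>
    have hp : r ^ (m + 1) % 2 = 1 := by
      rw [Nat.pow_mod, hr, one_pow]
      rfl
    rw [sgeo_succ]
    
    omega

private lemma sgeo_mod_self (r m : ℕ) (hr : 2 ≤ r) : sgeo r m % r = 1 := by
  induction m with
  | zero =>
    have h0 : sgeo r 0 = 1 := by simp [sgeo]
    rw [h0]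
    exact Nat.mod_eq_of_lt (by omega)
  | succ m ih =>
    rw [sgeo_succ, pow_succ, Nat.add_mul_mod_self_right, ih]

private lemma sgeo_mod_three (r m j : ℕ) (hr : r % 3 = 2) (hj : m = 2 * j) :
    sgeo r m % 3 = 1 := by
  subst hj
  induction j with
  | zero => simp [sgeo]
  | succ j ih =>
    have h2 : sgeo r (2 * (j + 1)) = sgeo r (2 * j) + r ^ (2 * j + 1) * (1 + r) := by
      have e : 2 * (j + 1) = (2 * j + 1) + 1 := by ring
      rw [e, sgeo_succ, sgeo_succ]
      ring
    have h3 : (r ^ (2 * j + 1) * (1 + r)) % 3 = 0 := by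
      have h1r : (1 + r) % 3 = 0 := by omega
      rw [Nat.mul_mod, h1r, Nat.mul_zero, Nat.zero_mod]
    rw [h2]
    omega

private lemma pow_expand (t : ℕ) : ∀ i : ℕ, ∃ g, (3 * t + 1) ^ i = 1 + 3 * t * i + 9 * g := by
  intro i
  induction i with
  | zero => exact ⟨0, by simp⟩
  | succ i ih =>
    obtain ⟨g, hg⟩ := ih
    exact ⟨t * t * i + 3 * t * g + g, by rw [pow_succ, hg]; ring⟩

private lemma sgeo_expand (t w : ℕ) :
    ∃ G, sgeo (3 * t + 1) (2 * w) = (2 * w + 1) + 3 * t * (w * (2 * w + 1)) + 9 * G := by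
  induction w with
  | zero => exact ⟨0, by simp [sgeo]⟩
  | succ w ih =>
    obtain ⟨G, hG⟩ := ih
    obtain ⟨g1, h1⟩ := pow_expand t (2 * w + 1)
    obtain ⟨g2, h2⟩ := pow_expand t (2 * w + 2)
    refine ⟨G + g1 + g2, ?_⟩
    have e : 2 * (w + 1) = (2 * w + 1) + 1 := by ring
    rw [e, sgeo_succ, show (2 * w + 1) = (2 * w) + 1 from rfl, sgeo_succ, hG]
    rw [show (2*w)+1 = 2*w+1 from rfl, h1, show (2*w+1)+1 = 2*w+2 from rfl, h2]
    ring

private lemma nine_dvd_exp (r m : ℕ) (hr : r % 3 = 1) (hm : Even m)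
    (h9 : 9 ∣ sgeo r m) : 9 ∣ (m + 1) := by
  obtain ⟨t, rfl⟩ : ∃ t, r = 3 * t + 1 := ⟨r / 3, by omega⟩
  obtain ⟨w, rfl⟩ : ∃ w, m = 2 * w := by
    obtain ⟨u, hu⟩ := hm; exact ⟨u, by omega⟩
  obtain ⟨G, hG⟩ := sgeo_expand t w
  have key : sgeo (3 * t + 1) (2 * w) = (2 * w + 1) * (1 + 3 * (t * w)) + 9 * G := by
    rw [hG]; ring
  have h9Z : 9 ∣ (2 * w + 1) * (1 + 3 * (t * w)) := by
    generalize hZ : (2 * w + 1) * (1 + 3 * (t * w)) = Z at key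
    omega
  have hp3 : Nat.Prime 3 := by norm_num
  have h3 : (3 : ℕ) ∣ (2 * w + 1) := by
    rcases (hp3.dvd_mul.mp (dvd_trans (by norm_num) h9Z)) with h' | h'
    · exact h'
    · omega
  obtain ⟨M, hM⟩ := h3
  have h9M : 9 ∣ 3 * (M * (1 + 3 * (t * w))) := by
    have e : (2 * w + 1) * (1 + 3 * (t * w)) = 3 * (M * (1 + 3 * (t * w))) := by
      rw [hM]; ring
    rwa [e] at h9Z
  have h3K : (3 : ℕ) ∣ M * (1 + 3 * (t * w)) := by
    generalize hK : M * (1 + 3 * (t * w)) = K at h9M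
    omega
  have h3M : (3 : ℕ) ∣ M := by
    rcases hp3.dvd_mul.mp h3K with h' | h'
    · exact h'
    · omega
  omega

private lemma sgeo_eight_dvd (r m : ℕ) (hr : 2 ≤ r) (h9 : 9 ∣ (m + 1)) :
    sgeo r 8 ∣ sgeo r m := by
  obtain ⟨k, hk⟩ := h9
  have h1 : (r ^ 9 - 1) ∣ (r ^ (m + 1) - 1) := by
    have e : r ^ (m + 1) = (r ^ 9) ^ k := by rw [← pow_mul, ← hk]
    rw [e]
    simpa using Nat.sub_dvd_pow_sub_pow (r ^ 9) 1 k
  have e8 : (r - 1) * sgeo r 8 = r ^ 9 - 1 :=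
    Nat.eq_sub_of_add_eq (sgeo_sub_one r 8 (by omega))
  have em : (r - 1) * sgeo r m = r ^ (m + 1) - 1 :=
    Nat.eq_sub_of_add_eq (sgeo_sub_one r m (by omega))
  rw [← e8, ← em] at h1
  exact (mul_dvd_mul_iff_left (show (r - 1 : ℕ) ≠ 0 by omega)).mp h1

private lemma sgeo_eight_factor (r : ℕ) :
    sgeo r 8 = (1 + r + r ^ 2) * (1 + r ^ 3 + (r ^ 3) ^ 2) := by
  simp [sgeo, Finset.sum_range_succ]
  ring

private lemma not_five_dvd (x : ℕ) : ¬ (5 : ℕ) ∣ (1 + x + x ^ 2) := by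
  intro h
  have h0 : ((1 + x + x ^ 2 : ℕ) : ZMod 5) = 0 :=
    (ZMod.natCast_eq_zero_iff _ _).mpr h
  push_cast at h0
  have hall : ∀ y : ZMod 5, 1 + y + y ^ 2 ≠ 0 := by decide
  exact hall _ h0

private lemma not_eleven_dvd (x : ℕ) : ¬ (11 : ℕ) ∣ (1 + x + x ^ 2) := by
  intro h
  have h0 : ((1 + x + x ^ 2 : ℕ) : ZMod 11) = 0 :=
    (ZMod.natCast_eq_zero_iff _ _).mpr h
  push_cast at h0
  have hall : ∀ y : ZMod 11, 1 + y + y ^ 2 ≠ 0 := by decide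
  exact hall _ h0

private lemma p3_mod_nine (r : ℕ) (hr : r % 3 = 1) : (1 + r + r ^ 2) % 9 = 3 := by
  obtain ⟨t, rfl⟩ : ∃ t, r = 3 * t + 1 := ⟨r / 3, by omega⟩
  have e : ∃ X, 1 + (3 * t + 1) + (3 * t + 1) ^ 2 = 9 * X + 3 := ⟨t * t + t, by ring⟩
  obtain ⟨X, hX⟩ := e
  omega

private lemma cube_mod_nine (r : ℕ) (hr : r % 3 = 1) : r ^ 3 % 9 = 1 := by
  obtain ⟨t, rfl⟩ : ∃ t, r = 3 * t + 1 := ⟨r / 3, by omega⟩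
  have e : ∃ X, (3 * t + 1) ^ 3 = 9 * X + 1 := ⟨3 * t ^ 3 + 3 * t ^ 2 + t, by ring⟩
  obtain ⟨X, hX⟩ := e
  omega

private lemma p9_mod_nine (x : ℕ) (hx : x % 9 = 1) : (1 + x + x ^ 2) % 9 = 3 := by
  obtain ⟨s, rfl⟩ : ∃ s, x = 9 * s + 1 := ⟨x / 9, by omega⟩
  have e : ∃ X, 1 + (9 * s + 1) + (9 * s + 1) ^ 2 = 9 * X + 3 := ⟨9 * s ^ 2 + 3 * s, by ring⟩
  obtain ⟨X, hX⟩ := e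
  omega

private lemma prime_dvd_n {s q p : ℕ} (hs : s.Prime) (hq : q.Prime) (hp : p.Prime)
    (a b c e : ℕ) (h : s ∣ 3 ^ a * 11 ^ b * q ^ c * p ^ e) :
    s = 3 ∨ s = 11 ∨ s = q ∨ s = p := by
  rcases (Nat.Prime.dvd_mul hs).mp h with h1 | h4
  · rcases (Nat.Prime.dvd_mul hs).mp h1 with h2 | h3
    · rcases (Nat.Prime.dvd_mul hs).mp h2 with h5 | h6
      · exact Or.inl ((Nat.prime_dvd_prime_iff_eq hs (by norm_num)).mp (hs.dvd_of_dvd_pow h5))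
      · exact Or.inr (Or.inl
          ((Nat.prime_dvd_prime_iff_eq hs (by norm_num)).mp (hs.dvd_of_dvd_pow h6)))
    · exact Or.inr (Or.inr (Or.inl
        ((Nat.prime_dvd_prime_iff_eq hs hq).mp (hs.dvd_of_dvd_pow h3))))
  · exact Or.inr (Or.inr (Or.inr
      ((Nat.prime_dvd_prime_iff_eq hs hp).mp (hs.dvd_of_dvd_pow h4))))

private lemma ineq221 {q p : ℕ} (hq : 13 ≤ q) (hp : 17 ≤ p) :
    192 * (q * p) ≤ 221 * ((q - 1) * (p - 1)) := by
  obtain ⟨q0, rfl⟩ : ∃ q0, q = 13 + q0 := ⟨q - 13, by omega⟩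
  obtain ⟨p0, rfl⟩ : ∃ p0, p = 17 + p0 := ⟨p - 17, by omega⟩
  have h1 : (13 + q0 - 1) = 12 + q0 := by omega
  have h2 : (17 + p0 - 1) = 16 + p0 := by omega
  rw [h1, h2]
  have e : 221 * ((12 + q0) * (16 + p0))
      = 192 * ((13 + q0) * (17 + p0)) + (156 * p0 + 272 * q0 + 29 * (q0 * p0)) := by ring
  rw [e]
  exact Nat.le_add_right _ _

private lemma ineq340 {q p : ℕ} (hq : 17 ≤ q) (hp : 19 ≤ p) :
    297 * (q * p) ≤ 340 * ((q - 1) * (p - 1)) := by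
  obtain ⟨q0, rfl⟩ : ∃ q0, q = 17 + q0 := ⟨q - 17, by omega⟩
  obtain ⟨p0, rfl⟩ : ∃ p0, p = 19 + p0 := ⟨p - 19, by omega⟩
  have h1 : (17 + q0 - 1) = 16 + q0 := by omega
  have h2 : (19 + p0 - 1) = 18 + p0 := by omega
  rw [h1, h2]
  have e : 340 * ((16 + q0) * (18 + p0))
      = 297 * ((17 + q0) * (19 + p0)) + (1989 + 391 * p0 + 477 * q0 + 43 * (q0 * p0)) := by ring
  rw [e]
  exact Nat.le_add_right _ _

private lemma not13_sgeo11 {b : ℕ} (hb : Even b) : ¬ (13 : ℕ) ∣ sgeo 11 b := by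
  intro h
  obtain ⟨j, rfl⟩ : ∃ j, b = 2 * j := by obtain ⟨u, hu⟩ := hb; exact ⟨u, by omega⟩
  have e : 10 * sgeo 11 (2 * j) + 1 = 11 ^ (2 * j + 1) := by
    have h' := sgeo_sub_one 11 (2 * j) (by norm_num)
    norm_num at h'
    exact h'
  have h10 : (13 : ℕ) ∣ 10 * sgeo 11 (2 * j) := Dvd.dvd.mul_left h 10
  have hmod : 11 ^ (2 * j + 1) % 13 = 1 := by omega
  have hsplit : 2 * j + 1 = 12 * (j / 6) + (2 * (j % 6) + 1) := by omega
  rw [hsplit, pow_add, pow_mul, Nat.mul_mod, Nat.pow_mod] at hmod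
  norm_num at hmod
  have h6 : j % 6 < 6 := Nat.mod_lt _ (by norm_num)
  set i := j % 6 with hi
  interval_cases i <;> norm_num at hmod

private lemma not13_sgeo17 {e : ℕ} (he : Even e) : ¬ (13 : ℕ) ∣ sgeo 17 e := by
  intro h
  obtain ⟨j, rfl⟩ : ∃ j, e = 2 * j := by obtain ⟨u, hu⟩ := he; exact ⟨u, by omega⟩
  have heq : 16 * sgeo 17 (2 * j) + 1 = 17 ^ (2 * j + 1) := by
    have h' := sgeo_sub_one 17 (2 * j) (by norm_num)
    norm_num at h'
    exact h'
  have h16 : (13 : ℕ) ∣ 16 * sgeo 17 (2 * j) := Dvd.dvd.mul_left h 16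
  have hmod : 17 ^ (2 * j + 1) % 13 = 1 := by omega
  have hsplit : 2 * j + 1 = 6 * (j / 3) + (2 * (j % 3) + 1) := by omega
  rw [hsplit, pow_add, pow_mul, Nat.mul_mod, Nat.pow_mod] at hmod
  norm_num at hmod
  have h3 : j % 3 < 3 := Nat.mod_lt _ (by norm_num)
  set i := j % 3 with hi
  interval_cases i <;> norm_num at hmod

private lemma lem9 (r o : ℕ) (hr : r.Prime) (hr11 : 11 < r) (ho11 : 11 < o)
    (m : ℕ) (hm : Even m) (h9 : 9 ∣ sgeo r m)
    (hsup : ∀ s : ℕ, s.Prime → s ∣ sgeo r m → s = 3 ∨ s = 5 ∨ s = 11 ∨ s = r ∨ s = o) :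
    False := by
  have hr3 : r % 3 = 1 := by
    by_contra hne
    have h03 : r % 3 = 0 ∨ r % 3 = 2 := by omega
    rcases h03 with h0 | h2
    · have hd : (3 : ℕ) ∣ r := Nat.dvd_of_mod_eq_zero h0
      have := (Nat.prime_dvd_prime_iff_eq (by norm_num) hr).mp hd
      omega
    · obtain ⟨j, hj⟩ : ∃ j, m = 2 * j := by obtain ⟨u, hu⟩ := hm; exact ⟨u, by omega⟩
      have := sgeo_mod_three r m j h2 hj
      omega
  have h9m : 9 ∣ (m + 1) := nine_dvd_exp r m hr3 hm h9
  have hdvd8 : sgeo r 8 ∣ sgeo r m := sgeo_eight_dvd r m hr.two_le h9m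
  have hfac : sgeo r 8 = (1 + r + r ^ 2) * (1 + r ^ 3 + (r ^ 3) ^ 2) := sgeo_eight_factor r
  have hP3dvd : (1 + r + r ^ 2) ∣ sgeo r m :=
    dvd_trans ⟨1 + r ^ 3 + (r ^ 3) ^ 2, hfac⟩ hdvd8
  have hP9dvd : (1 + r ^ 3 + (r ^ 3) ^ 2) ∣ sgeo r m :=
    dvd_trans ⟨1 + r + r ^ 2, by rw [hfac]; ring⟩ hdvd8
  have hr12 : 12 ≤ r := by omega
  have hx3 : r ^ 3 % 9 = 1 := cube_mod_nine r hr3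
  have hP3mod : (1 + r + r ^ 2) % 9 = 3 := p3_mod_nine r hr3
  have hP9mod : (1 + r ^ 3 + (r ^ 3) ^ 2) % 9 = 3 := p9_mod_nine (r ^ 3) hx3
  have hrsq : 144 ≤ r ^ 2 := by
    calc (144 : ℕ) = 12 ^ 2 := by norm_num
    _ ≤ r ^ 2 := Nat.pow_le_pow_left hr12 2
  have hP3big : 9 < 1 + r + r ^ 2 := by omega
  have hx12 : 12 ≤ r ^ 3 := le_trans hr12 (Nat.le_self_pow (by norm_num) r)
  have hxsq : 144 ≤ (r ^ 3) ^ 2 := by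
    calc (144 : ℕ) = 12 ^ 2 := by norm_num
    _ ≤ (r ^ 3) ^ 2 := Nat.pow_le_pow_left hx12 2
  have hP9big : 9 < 1 + r ^ 3 + (r ^ 3) ^ 2 := by omega
  have main : ∀ P : ℕ, P % 9 = 3 → 9 < P → P ∣ sgeo r m →
      (¬ (5 : ℕ) ∣ P) → (¬ (11 : ℕ) ∣ P) → (¬ r ∣ P) → o ∣ P := by
    intro P hPmod hPbig hPdvd h5 h11 hrP
    obtain ⟨V, hV⟩ : ∃ V, P = 3 * V := ⟨P / 3, by omega⟩
    have hV3 : V % 3 = 1 := by omega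
    have hV1 : 1 < V := by omega
    have hsp : (V.minFac).Prime := Nat.minFac_prime (by omega)
    have hsV : V.minFac ∣ V := Nat.minFac_dvd V
    have hsP : V.minFac ∣ P := by rw [hV]; exact hsV.mul_left 3
    have hsS : V.minFac ∣ sgeo r m := hsP.trans hPdvd
    rcases hsup V.minFac hsp hsS with h | h | h | h | h
    · exfalso; rw [h] at hsV; omega
    · exfalso; rw [h] at hsP; exact h5 hsP
    · exfalso; rw [h] at hsP; exact h11 hsP
    · exfalso; rw [h] at hsP; exact hrP hsP
    · rw [h] at hsP; exact hsP
  have hrP3 : ¬ r ∣ (1 + r + r ^ 2) := by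
    intro h
    have h2 : r ∣ r * (1 + r) := Dvd.intro _ rfl
    have e : 1 + r + r ^ 2 = r * (1 + r) + 1 := by ring
    rw [e] at h
    have h3 : r ∣ 1 := (Nat.dvd_add_right h2).mp h
    have := Nat.le_of_dvd one_pos h3
    omega
  have hrP9 : ¬ r ∣ (1 + r ^ 3 + (r ^ 3) ^ 2) := by
    intro h
    have h2 : r ∣ r * (r ^ 2 + r ^ 5) := Dvd.intro _ rfl
    have e : 1 + r ^ 3 + (r ^ 3) ^ 2 = r * (r ^ 2 + r ^ 5) + 1 := by ring
    rw [e] at h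
    have h3 : r ∣ 1 := (Nat.dvd_add_right h2).mp h
    have := Nat.le_of_dvd one_pos h3
    omega
  have hoP3 : o ∣ (1 + r + r ^ 2) :=
    main _ hP3mod hP3big hP3dvd (not_five_dvd r) (not_eleven_dvd r) hrP3
  have hoP9 : o ∣ (1 + r ^ 3 + (r ^ 3) ^ 2) :=
    main _ hP9mod hP9big hP9dvd (not_five_dvd (r ^ 3)) (not_eleven_dvd (r ^ 3)) hrP9
  have hcube : (r - 1) * (1 + r + r ^ 2) + 1 = r ^ 3 := by
    obtain ⟨u, rfl⟩ : ∃ u, r = u + 1 := ⟨r - 1, by omega⟩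
    simp only [Nat.add_sub_cancel]
    ring
  have hx1 : o ∣ (r ^ 3 - 1) := by
    have e : (r - 1) * (1 + r + r ^ 2) = r ^ 3 - 1 := Nat.eq_sub_of_add_eq hcube
    rw [← e]
    exact Dvd.dvd.mul_left hoP3 (r - 1)
  have hfin : o ∣ 3 := by
    obtain ⟨y, hy⟩ : ∃ y, r ^ 3 = y + 1 := ⟨r ^ 3 - 1, by omega⟩
    have e2 : 1 + r ^ 3 + (r ^ 3) ^ 2 = (r ^ 3 - 1) * (r ^ 3 + 2) + 3 := by
      rw [hy]
      simp only [Nat.add_sub_cancel]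
      ring
    have h1 : o ∣ (r ^ 3 - 1) * (r ^ 3 + 2) := hx1.mul_right _
    rw [e2] at hoP9
    exact (Nat.dvd_add_right h1).mp hoP9
  have := Nat.le_of_dvd (by norm_num) hfin
  omega

set_option maxHeartbeats 8000000

theorem stmt18 (q p : ℕ) (hq : q.Prime) (hp : p.Prime)
    (hq2 : 11 < q) (hqp : q < p)
    (α₁ α₂ α₃ α₄ : ℕ) (hα₁ : 0 < α₁) (hα₂ : 0 < α₂) (hα₃ : 0 < α₃) (hα₄ : 0 < α₄)
    (n : ℕ) (hn : n = 3 ^ α₁ * 11 ^ α₂ * q ^ α₃ * p ^ α₄)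
    (hodd : Odd n)
    (d : ℕ) (hdvd : d ∣ n) (hlt : d < n)
    (hσ : ArithmeticFunction.sigma 1 n = 2 * n - d) :
    False := by
  have hp3 : Nat.Prime 3 := by norm_num
  have hp11 : Nat.Prime 11 := by norm_num
  have hq13 : 13 ≤ q := by
    by_contra h
    push_neg at h
    interval_cases q
    · norm_num at hq
  have hp17 : 17 ≤ p := by
    have hp14 : 14 ≤ p := by omega
    by_contra h
    push_neg at h
    interval_cases p <;> norm_num at hp
  have hn0 : 0 < n := by
    rw [hn]; positivity
  -- σ decomposition
  have c3q : Nat.Coprime 3 q := (Nat.coprime_primes hp3 hq).mpr (by omega)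
  have c3p : Nat.Coprime 3 p := (Nat.coprime_primes hp3 hp).mpr (by omega)
  have c11q : Nat.Coprime 11 q := (Nat.coprime_primes hp11 hq).mpr (by omega)
  have c11p : Nat.Coprime 11 p := (Nat.coprime_primes hp11 hp).mpr (by omega)
  have c311 : Nat.Coprime 3 11 := by norm_num
  have cqp : Nat.Coprime q p := (Nat.coprime_primes hq hp).mpr (by omega)
  have hσdec : ArithmeticFunction.sigma 1 n
      = sgeo 3 α₁ * sgeo 11 α₂ * sgeo q α₃ * sgeo p α₄ := by
    rw [hn]
    rw [(ArithmeticFunction.isMultiplicative_sigma).map_mul_of_coprime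
      (Nat.Coprime.mul (Nat.Coprime.mul (Nat.Coprime.pow _ _ c3p) (Nat.Coprime.pow _ _ c11p)) (Nat.Coprime.pow _ _ cqp))]
    rw [(ArithmeticFunction.isMultiplicative_sigma).map_mul_of_coprime
      (Nat.Coprime.mul (Nat.Coprime.pow _ _ c3q) (Nat.Coprime.pow _ _ c11q))]
    rw [(ArithmeticFunction.isMultiplicative_sigma).map_mul_of_coprime (Nat.Coprime.pow _ _ c311)]
    rw [ArithmeticFunction.sigma_one_apply_prime_pow hp3,
        ArithmeticFunction.sigma_one_apply_prime_pow hp11,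
        ArithmeticFunction.sigma_one_apply_prime_pow hq,
        ArithmeticFunction.sigma_one_apply_prime_pow hp]
    rfl
  -- parity
  have hnodd : n % 2 = 1 := Nat.odd_iff.mp hodd
  have hdodd : d % 2 = 1 := by
    rcases Nat.even_or_odd d with hev | hod
    · exfalso
      obtain ⟨t, ht⟩ := hev
      have h2 : (2 : ℕ) ∣ n := dvd_trans ⟨t, by omega⟩ hdvd
      omega
    · exact Nat.odd_iff.mp hod
  have hdn : d ≤ n := Nat.le_of_lt hlt
  have hσodd : ArithmeticFunction.sigma 1 n % 2 = 1 := by omega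
  have hprod : (sgeo 3 α₁ * sgeo 11 α₂ * sgeo q α₃ * sgeo p α₄) % 2 = 1 := by
    rw [← hσdec]; exact hσodd
  have hOdd4 : Odd (sgeo 3 α₁) ∧ Odd (sgeo 11 α₂) ∧ Odd (sgeo q α₃) ∧ Odd (sgeo p α₄) := by
    have ho : Odd (sgeo 3 α₁ * sgeo 11 α₂ * sgeo q α₃ * sgeo p α₄) := Nat.odd_iff.mpr hprod
    rw [Nat.odd_mul, Nat.odd_mul, Nat.odd_mul] at ho
    tauto
  have hqodd : q % 2 = 1 := hq.eq_two_or_odd.resolve_left (by omega)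
  have hpodd : p % 2 = 1 := hp.eq_two_or_odd.resolve_left (by omega)
  have hEa : Even α₁ := by
    have h := sgeo_mod_two 3 α₁ (by norm_num)
    have h2 := Nat.odd_iff.mp hOdd4.1
    rw [Nat.even_iff]; omega
  have hEb : Even α₂ := by
    have h := sgeo_mod_two 11 α₂ (by norm_num)
    have h2 := Nat.odd_iff.mp hOdd4.2.1
    rw [Nat.even_iff]; omega
  have hEc : Even α₃ := by
    have h := sgeo_mod_two q α₃ hqodd
    have h2 := Nat.odd_iff.mp hOdd4.2.2.1
    rw [Nat.even_iff]; omega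
  have hEd : Even α₄ := by
    have h := sgeo_mod_two p α₄ hpodd
    have h2 := Nat.odd_iff.mp hOdd4.2.2.2
    rw [Nat.even_iff]; omega
  have ha2 : 2 ≤ α₁ := by obtain ⟨u, hu⟩ := hEa; omega
  have hb2 : 2 ≤ α₂ := by obtain ⟨u, hu⟩ := hEb; omega
  have hc2 : 2 ≤ α₃ := by obtain ⟨u, hu⟩ := hEc; omega
  have he2 : 2 ≤ α₄ := by obtain ⟨u, hu⟩ := hEd; omega
  -- the quotient k
  obtain ⟨k, hk⟩ := hdvd
  have hd0 : 0 < d := by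
    rcases Nat.eq_zero_or_pos d with h0 | h0
    · exfalso; rw [h0] at hk; simp at hk; omega
    · exact h0
  have hk2 : 2 ≤ k := by
    rcases Nat.lt_or_ge k 2 with h | h
    · interval_cases k
      · simp at hk; omega
      · simp at hk; omega
    · exact h
  have hkdvd : k ∣ n := ⟨d, by rw [hk]; ring⟩
  have hkodd : k % 2 = 1 := by
    by_contra h
    have h2 : (2 : ℕ) ∣ k := by omega
    have := h2.trans hkdvd
    omega
  have hk3 : 3 ≤ k := by omega
  -- the master equation : k * σ + n = 2 * (k * n)
  have hσd : ArithmeticFunction.sigma 1 n + d = 2 * n := by omega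
  have hkd : k * d = n := by rw [hk]; ring
  have heq0 : k * ArithmeticFunction.sigma 1 n + n = 2 * (k * n) := by
    have h1 : k * (ArithmeticFunction.sigma 1 n + d) = k * (2 * n) := by rw [hσd]
    calc k * ArithmeticFunction.sigma 1 n + n
        = k * ArithmeticFunction.sigma 1 n + k * d := by rw [hkd]
      _ = k * (ArithmeticFunction.sigma 1 n + d) := by ring
      _ = k * (2 * n) := h1
      _ = 2 * (k * n) := by ring
  -- master strict inequality
  have e3 : 2 * sgeo 3 α₁ + 1 = 3 ^ (α₁ + 1) := by
    have h' := sgeo_sub_one 3 α₁ (by norm_num)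
    norm_num at h'; exact h'
  have e11 : 10 * sgeo 11 α₂ + 1 = 11 ^ (α₂ + 1) := by
    have h' := sgeo_sub_one 11 α₂ (by norm_num)
    norm_num at h'; exact h'
  have eq' : (q - 1) * sgeo q α₃ + 1 = q ^ (α₃ + 1) := sgeo_sub_one q α₃ (by omega)
  have ep' : (p - 1) * sgeo p α₄ + 1 = p ^ (α₄ + 1) := sgeo_sub_one p α₄ (by omega)
  have f1 : 2 * sgeo 3 α₁ < 3 ^ (α₁ + 1) := by omega
  have f2 : 10 * sgeo 11 α₂ < 11 ^ (α₂ + 1) := by omega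
  have f3 : (q - 1) * sgeo q α₃ < q ^ (α₃ + 1) := by
    generalize hu : (q - 1) * sgeo q α₃ = u at eq'
    omega
  have f4 : (p - 1) * sgeo p α₄ < p ^ (α₄ + 1) := by
    generalize hu : (p - 1) * sgeo p α₄ = u at ep'
    omega
  have g1 : (2 * sgeo 3 α₁) * (10 * sgeo 11 α₂) < 3 ^ (α₁ + 1) * 11 ^ (α₂ + 1) :=
    mul_lt_mul'' f1 f2 (Nat.zero_le _) (Nat.zero_le _)
  have g2 : ((q - 1) * sgeo q α₃) * ((p - 1) * sgeo p α₄) < q ^ (α₃ + 1) * p ^ (α₄ + 1) :=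
    mul_lt_mul'' f3 f4 (Nat.zero_le _) (Nat.zero_le _)
  have gbig : (2 * sgeo 3 α₁) * (10 * sgeo 11 α₂) * (((q - 1) * sgeo q α₃) * ((p - 1) * sgeo p α₄))
      < 3 ^ (α₁ + 1) * 11 ^ (α₂ + 1) * (q ^ (α₃ + 1) * p ^ (α₄ + 1)) :=
    mul_lt_mul'' g1 g2 (Nat.zero_le _) (Nat.zero_le _)
  have hLHSeq : (2 * sgeo 3 α₁) * (10 * sgeo 11 α₂) * (((q - 1) * sgeo q α₃) * ((p - 1) * sgeo p α₄))
      = 20 * ((q - 1) * (p - 1)) * (ArithmeticFunction.sigma 1 n) := by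
    rw [hσdec]; ring
  have hRHSeq : 3 ^ (α₁ + 1) * 11 ^ (α₂ + 1) * (q ^ (α₃ + 1) * p ^ (α₄ + 1))
      = 33 * (q * p) * n := by
    rw [hn]; ring
  rw [hLHSeq, hRHSeq] at gbig
  -- multiply by k
  have gk : k * (20 * ((q - 1) * (p - 1)) * (ArithmeticFunction.sigma 1 n))
      < k * (33 * (q * p) * n) := by
    exact Nat.mul_lt_mul_of_pos_left gbig (by omega)
  have gk2 : 20 * ((q - 1) * (p - 1)) * (k * ArithmeticFunction.sigma 1 n)
      < 33 * (q * p) * (k * n) := by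
    calc 20 * ((q - 1) * (p - 1)) * (k * ArithmeticFunction.sigma 1 n)
        = k * (20 * ((q - 1) * (p - 1)) * (ArithmeticFunction.sigma 1 n)) := by ring
      _ < k * (33 * (q * p) * n) := gk
      _ = 33 * (q * p) * (k * n) := by ring
  -- k ≤ 9
  have hk9 : k ≤ 9 := by
    have h221 := ineq221 hq13 hp17
    have step1 : 3840 * (q * p) * (k * ArithmeticFunction.sigma 1 n)
        ≤ 221 * (20 * ((q - 1) * (p - 1)) * (k * ArithmeticFunction.sigma 1 n)) := by
      calc 3840 * (q * p) * (k * ArithmeticFunction.sigma 1 n)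
          = (192 * (q * p)) * (20 * (k * ArithmeticFunction.sigma 1 n)) := by ring
        _ ≤ (221 * ((q - 1) * (p - 1))) * (20 * (k * ArithmeticFunction.sigma 1 n)) :=
            Nat.mul_le_mul h221 (le_refl _)
        _ = 221 * (20 * ((q - 1) * (p - 1)) * (k * ArithmeticFunction.sigma 1 n)) := by ring
    have step2 : 221 * (20 * ((q - 1) * (p - 1)) * (k * ArithmeticFunction.sigma 1 n))
        < 221 * (33 * (q * p) * (k * n)) :=
      Nat.mul_lt_mul_of_pos_left gk2 (by norm_num)
    have step3 : 3840 * (q * p) * (k * ArithmeticFunction.sigma 1 n)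
        < 7293 * (q * p) * (k * n) := by
      calc 3840 * (q * p) * (k * ArithmeticFunction.sigma 1 n)
          ≤ 221 * (20 * ((q - 1) * (p - 1)) * (k * ArithmeticFunction.sigma 1 n)) := step1
        _ < 221 * (33 * (q * p) * (k * n)) := step2
        _ = 7293 * (q * p) * (k * n) := by ring
    have hqppos : 0 < q * p := by positivity
    have step4 : 3840 * (k * ArithmeticFunction.sigma 1 n) < 7293 * (k * n) := by
      have h' : (q * p) * (3840 * (k * ArithmeticFunction.sigma 1 n))
          < (q * p) * (7293 * (k * n)) := by
        calc (q * p) * (3840 * (k * ArithmeticFunction.sigma 1 n))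
            = 3840 * (q * p) * (k * ArithmeticFunction.sigma 1 n) := by ring
          _ < 7293 * (q * p) * (k * n) := step3
          _ = (q * p) * (7293 * (k * n)) := by ring
      exact Nat.lt_of_mul_lt_mul_left h'
    -- now linear reasoning
    by_contra hcon
    push_neg at hcon
    have h10 : 10 * n ≤ k * n := Nat.mul_le_mul_right n (by omega)
    generalize hA : k * ArithmeticFunction.sigma 1 n = A at step4 heq0
    generalize hB : k * n = B at step4 heq0 h10
    omega
  have hkcase : k = 3 ∨ k = 5 ∨ k = 7 ∨ k = 9 := by omega
  have hk57 : k ≠ 5 ∧ k ≠ 7 := by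
    constructor
    · intro h5
      rw [h5] at hkdvd
      rw [hn] at hkdvd
      rcases prime_dvd_n (by norm_num) hq hp _ _ _ _ hkdvd with h | h | h | h <;> omega
    · intro h7
      rw [h7] at hkdvd
      rw [hn] at hkdvd
      rcases prime_dvd_n (by norm_num) hq hp _ _ _ _ hkdvd with h | h | h | h <;> omega
  have hk39 : k = 3 ∨ k = 9 := by tauto
  rcases hk39 with hk3' | hk9'
  · -- CASE k = 3 : 3 σ(n) = 5 n
    subst hk3'
    have heq3 : 3 * ArithmeticFunction.sigma 1 n = 5 * n := by omega
    have hS3mod : sgeo 3 α₁ % 3 = 1 := sgeo_mod_self 3 α₁ (by norm_num)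
    have hS11mod3 : sgeo 11 α₂ % 3 = 1 := by
      obtain ⟨j, hj⟩ : ∃ j, α₂ = 2 * j := by obtain ⟨u, hu⟩ := hEb; exact ⟨u, by omega⟩
      exact sgeo_mod_three 11 α₂ j (by norm_num) hj
    rcases (show α₁ = 2 ∨ 4 ≤ α₁ by obtain ⟨u, hu⟩ := hEa; omega) with hA2 | hA4
    · -- α₁ = 2, forces q = 13, then size contradiction
      subst hA2
      have hS3 : sgeo 3 2 = 13 := by
        simp [sgeo, Finset.sum_range_succ]
      have h13σ : (13 : ℕ) ∣ ArithmeticFunction.sigma 1 n := by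
        rw [hσdec, hS3]
        exact Dvd.dvd.mul_right (Dvd.dvd.mul_right (Dvd.dvd.mul_right dvd_rfl _) _) _
      have h13_5n : (13 : ℕ) ∣ 5 * n := by
        rw [← heq3]
        exact Dvd.dvd.mul_left h13σ 3
      have h13n : (13 : ℕ) ∣ n := by
        rcases (Nat.Prime.dvd_mul (by norm_num)).mp h13_5n with h | h
        · norm_num at h
        · exact h
      have hq13eq : q = 13 := by
        rw [hn] at h13n
        rcases prime_dvd_n (by norm_num) hq hp _ _ _ _ h13n with h | h | h | h <;> omega
      subst hq13eq
      obtain ⟨b2, hb2'⟩ : ∃ b2, α₂ = 2 + b2 := ⟨α₂ - 2, by omega⟩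
      obtain ⟨c2, hc2'⟩ : ∃ c2, α₃ = 2 + c2 := ⟨α₃ - 2, by omega⟩
      have hB : 11 ^ b2 * 133 ≤ sgeo 11 α₂ := by
        have h := sgeo_three_le 11 α₂ (by omega)
        have hh : α₂ - 2 = b2 := by omega
        rw [hh] at h
        norm_num at h
        exact h
      have hC : 13 ^ c2 * 183 ≤ sgeo 13 α₃ := by
        have h := sgeo_three_le 13 α₃ (by omega)
        have hh : α₃ - 2 = c2 := by omega
        rw [hh] at h
        norm_num at h
        exact h
      have hD : p ^ α₄ ≤ sgeo p α₄ := sgeo_le p α₄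
      have hbig : 949221 * (11 ^ b2 * (13 ^ c2 * p ^ α₄)) ≤ 3 * ArithmeticFunction.sigma 1 n := by
        rw [hσdec, hS3]
        calc 949221 * (11 ^ b2 * (13 ^ c2 * p ^ α₄))
            = 39 * ((11 ^ b2 * 133) * ((13 ^ c2 * 183) * (p ^ α₄))) := by ring
          _ ≤ 39 * (sgeo 11 α₂ * (sgeo 13 α₃ * sgeo p α₄)) :=
              Nat.mul_le_mul (le_refl 39) (Nat.mul_le_mul hB (Nat.mul_le_mul hC hD))
          _ = 3 * (13 * sgeo 11 α₂ * sgeo 13 α₃ * sgeo p α₄) := by ring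
      have hsmall : 5 * n = 920205 * (11 ^ b2 * (13 ^ c2 * p ^ α₄)) := by
        rw [hn, hb2', hc2']
        ring
      rw [heq3, hsmall] at hbig
      have hW : 0 < 11 ^ b2 * (13 ^ c2 * p ^ α₄) := by positivity
      have hlt' : 920205 * (11 ^ b2 * (13 ^ c2 * p ^ α₄))
          < 949221 * (11 ^ b2 * (13 ^ c2 * p ^ α₄)) :=
        Nat.mul_lt_mul_of_pos_right (by norm_num) hW
      exact lt_irrefl _ (lt_of_lt_of_le hlt' hbig)
    · -- α₁ ≥ 4
      have hsplit3 : (3 : ℕ) ^ α₁ = 3 * 3 ^ (α₁ - 1) := by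
        have h1 : α₁ - 1 + 1 = α₁ := by omega
        calc (3 : ℕ) ^ α₁ = 3 ^ (α₁ - 1 + 1) := by rw [h1]
          _ = 3 * 3 ^ (α₁ - 1) := by rw [pow_succ]; ring
      have hXeq : sgeo 3 α₁ * sgeo 11 α₂ * (sgeo q α₃ * sgeo p α₄)
          = 3 ^ (α₁ - 1) * (5 * (11 ^ α₂ * q ^ α₃ * p ^ α₄)) := by
        have h3 : 3 * (sgeo 3 α₁ * sgeo 11 α₂ * (sgeo q α₃ * sgeo p α₄))
            = 3 * (3 ^ (α₁ - 1) * (5 * (11 ^ α₂ * q ^ α₃ * p ^ α₄))) := by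
          calc 3 * (sgeo 3 α₁ * sgeo 11 α₂ * (sgeo q α₃ * sgeo p α₄))
              = 3 * (sgeo 3 α₁ * sgeo 11 α₂ * sgeo q α₃ * sgeo p α₄) := by ring
            _ = 3 * ArithmeticFunction.sigma 1 n := by rw [hσdec]
            _ = 5 * n := heq3
            _ = 5 * (3 ^ α₁ * 11 ^ α₂ * q ^ α₃ * p ^ α₄) := by rw [hn]
            _ = 3 * (3 ^ (α₁ - 1) * (5 * (11 ^ α₂ * q ^ α₃ * p ^ α₄))) := by
                rw [hsplit3]; ring
        exact Nat.eq_of_mul_eq_mul_left (by norm_num) h3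
      have hdvd31 : 3 ^ (α₁ - 1) ∣ sgeo 3 α₁ * sgeo 11 α₂ * (sgeo q α₃ * sgeo p α₄) :=
        ⟨5 * (11 ^ α₂ * q ^ α₃ * p ^ α₄), hXeq⟩
      have hcop3S : Nat.Coprime (3 ^ (α₁ - 1)) (sgeo 3 α₁ * sgeo 11 α₂) := by
        apply Nat.Coprime.pow_left
        apply Nat.Coprime.mul_right
        · exact (Nat.Prime.coprime_iff_not_dvd hp3).mpr (by omega)
        · exact (Nat.Prime.coprime_iff_not_dvd hp3).mpr (by omega)
      have h3qp : 3 ^ (α₁ - 1) ∣ sgeo q α₃ * sgeo p α₄ :=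
        Nat.Coprime.dvd_of_dvd_mul_left hcop3S hdvd31
      have h27 : (27 : ℕ) ∣ sgeo q α₃ * sgeo p α₄ := by
        have hpd : (3 : ℕ) ^ 3 ∣ 3 ^ (α₁ - 1) := pow_dvd_pow 3 (by omega)
        have h27' : (27 : ℕ) ∣ 3 ^ (α₁ - 1) := by norm_num at hpd; exact hpd
        exact h27'.trans h3qp
      have h9or : 9 ∣ sgeo q α₃ ∨ 9 ∣ sgeo p α₄ := by
        by_contra hh
        push_neg at hh
        obtain ⟨h1, h2⟩ := hh
        have hq0 : sgeo q α₃ ≠ 0 := by have := sgeo_pos q α₃; omega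
        have hp0 : sgeo p α₄ ≠ 0 := by have := sgeo_pos p α₄; omega
        have hf : 3 ≤ (sgeo q α₃ * sgeo p α₄).factorization 3 := by
          rw [← Nat.Prime.pow_dvd_iff_le_factorization hp3 (mul_ne_zero hq0 hp0)]
          norm_num
          exact h27
        rw [Nat.factorization_mul hq0 hp0, Finsupp.add_apply] at hf
        have g1 : (sgeo q α₃).factorization 3 ≤ 1 := by
          by_contra g
          push_neg at g
          have hdd : (3 : ℕ) ^ 2 ∣ sgeo q α₃ :=
            (Nat.Prime.pow_dvd_iff_le_factorization hp3 hq0).mpr (by omega)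
          norm_num at hdd
          exact h1 hdd
        have g2 : (sgeo p α₄).factorization 3 ≤ 1 := by
          by_contra g
          push_neg at g
          have hdd : (3 : ℕ) ^ 2 ∣ sgeo p α₄ :=
            (Nat.Prime.pow_dvd_iff_le_factorization hp3 hp0).mpr (by omega)
          norm_num at hdd
          exact h2 hdd
        omega
      have hsup_gen : ∀ X : ℕ, X ∣ ArithmeticFunction.sigma 1 n →
          ∀ s : ℕ, s.Prime → s ∣ X → s = 3 ∨ s = 5 ∨ s = 11 ∨ s = q ∨ s = p := by
        intro X hX s hs hsX
        have hsσ : s ∣ ArithmeticFunction.sigma 1 n := hsX.trans hX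
        have hs5n : s ∣ 5 * n := by
          rw [← heq3]
          exact Dvd.dvd.mul_left hsσ 3
        rcases (Nat.Prime.dvd_mul hs).mp hs5n with h5 | hn'
        · exact Or.inr (Or.inl ((Nat.prime_dvd_prime_iff_eq hs (by norm_num)).mp h5))
        · rw [hn] at hn'
          rcases prime_dvd_n hs hq hp _ _ _ _ hn' with h | h | h | h
          · exact Or.inl h
          · exact Or.inr (Or.inr (Or.inl h))
          · exact Or.inr (Or.inr (Or.inr (Or.inl h)))
          · exact Or.inr (Or.inr (Or.inr (Or.inr h)))
      rcases h9or with h9q | h9p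
      · refine lem9 q p hq hq2 (by omega) α₃ hEc h9q ?_
        intro s hs hsd
        have hXdvd : sgeo q α₃ ∣ ArithmeticFunction.sigma 1 n := by
          rw [hσdec]
          exact ⟨sgeo 3 α₁ * sgeo 11 α₂ * sgeo p α₄, by ring⟩
        exact hsup_gen _ hXdvd s hs hsd
      · refine lem9 p q hp (by omega) hq2 α₄ hEd h9p ?_
        intro s hs hsd
        have hXdvd : sgeo p α₄ ∣ ArithmeticFunction.sigma 1 n := by
          rw [hσdec]
          exact ⟨sgeo 3 α₁ * sgeo 11 α₂ * sgeo q α₃, by ring⟩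
        rcases hsup_gen _ hXdvd s hs hsd with h | h | h | h | h
        · exact Or.inl h
        · exact Or.inr (Or.inl h)
        · exact Or.inr (Or.inr (Or.inl h))
        · exact Or.inr (Or.inr (Or.inr (Or.inr h)))
        · exact Or.inr (Or.inr (Or.inr (Or.inl h)))
  · -- CASE k = 9 : 9 σ(n) = 17 n
    subst hk9'
    have heq9 : 9 * ArithmeticFunction.sigma 1 n = 17 * n := by omega
    -- pin down q = 13 and p = 17
    have hG9 : 340 * ((q - 1) * (p - 1)) < 297 * (q * p) := by
      have h1 : 20 * ((q - 1) * (p - 1)) * (9 * ArithmeticFunction.sigma 1 n)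
          < 33 * (q * p) * (9 * n) := gk2
      rw [heq9] at h1
      have h2 : (340 * ((q - 1) * (p - 1))) * n < (297 * (q * p)) * n := by
        calc (340 * ((q - 1) * (p - 1))) * n
            = 20 * ((q - 1) * (p - 1)) * (17 * n) := by ring
          _ < 33 * (q * p) * (9 * n) := h1
          _ = (297 * (q * p)) * n := by ring
      have h3 : n * (340 * ((q - 1) * (p - 1))) < n * (297 * (q * p)) := by
        calc n * (340 * ((q - 1) * (p - 1))) = (340 * ((q - 1) * (p - 1))) * n := by ring
          _ < (297 * (q * p)) * n := h2
          _ = n * (297 * (q * p)) := by ring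
      exact Nat.lt_of_mul_lt_mul_left h3
    have hq13e : q = 13 := by
      by_contra hne
      have hq17 : 17 ≤ q := by
        have h14 : 14 ≤ q := by omega
        by_contra hcc
        push_neg at hcc
        interval_cases q <;> norm_num at hq
      have hp19 : 19 ≤ p := by
        have h18 : 18 ≤ p := by omega
        by_contra hcc
        push_neg at hcc
        interval_cases p
        norm_num at hp
      have := ineq340 hq17 hp19
      omega
    subst hq13e
    have hp17e : p = 17 := by
      have hp18 : p ≤ 18 := by omega
      have hp14 : 14 ≤ p := by omega
      interval_cases p <;> norm_num at hp <;> rfl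
    subst hp17e
    -- 13^α₃ divides sgeo 3 α₁
    have h13n : (13 : ℕ) ^ α₃ ∣ n := by
      rw [hn]
      exact ⟨3 ^ α₁ * 11 ^ α₂ * 17 ^ α₄, by ring⟩
    have h13σ9 : (13 : ℕ) ^ α₃ ∣ 9 * ArithmeticFunction.sigma 1 n := by
      rw [heq9]
      exact h13n.mul_left 17
    have hcop139 : Nat.Coprime (13 ^ α₃) 9 := by
      apply Nat.Coprime.pow_left
      norm_num
    have h13σ : (13 : ℕ) ^ α₃ ∣ ArithmeticFunction.sigma 1 n :=
      Nat.Coprime.dvd_of_dvd_mul_left hcop139 h13σ9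
    have hn13_11 : ¬ (13 : ℕ) ∣ sgeo 11 α₂ := not13_sgeo11 hEb
    have hn13_13 : ¬ (13 : ℕ) ∣ sgeo 13 α₃ := by
      have := sgeo_mod_self 13 α₃ (by norm_num)
      omega
    have hn13_17 : ¬ (13 : ℕ) ∣ sgeo 17 α₄ := not13_sgeo17 hEd
    have hcop13S : Nat.Coprime (13 ^ α₃) (sgeo 11 α₂ * (sgeo 13 α₃ * sgeo 17 α₄)) := by
      apply Nat.Coprime.pow_left
      apply Nat.Coprime.mul_right
      · exact (Nat.Prime.coprime_iff_not_dvd (by norm_num)).mpr hn13_11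
      · apply Nat.Coprime.mul_right
        · exact (Nat.Prime.coprime_iff_not_dvd (by norm_num)).mpr hn13_13
        · exact (Nat.Prime.coprime_iff_not_dvd (by norm_num)).mpr hn13_17
    have h13S3 : (13 : ℕ) ^ α₃ ∣ sgeo 3 α₁ := by
      have hd : (13 : ℕ) ^ α₃ ∣ sgeo 3 α₁ * (sgeo 11 α₂ * (sgeo 13 α₃ * sgeo 17 α₄)) := by
        have e : sgeo 3 α₁ * (sgeo 11 α₂ * (sgeo 13 α₃ * sgeo 17 α₄))
            = sgeo 3 α₁ * sgeo 11 α₂ * sgeo 13 α₃ * sgeo 17 α₄ := by ring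
        rw [e, ← hσdec]
        exact h13σ
      exact Nat.Coprime.dvd_of_dvd_mul_right hcop13S hd
    have h169 : (169 : ℕ) ∣ sgeo 3 α₁ := by
      have hpd : (13 : ℕ) ^ 2 ∣ 13 ^ α₃ := pow_dvd_pow 13 (by omega)
      have h169' : (169 : ℕ) ∣ 13 ^ α₃ := by norm_num at hpd; exact hpd
      exact h169'.trans h13S3
    have hpowmod : 3 ^ (α₁ + 1) % 169 = 1 := by omega
    have ha38 : 38 ≤ α₁ := by
      by_contra hcc
      push_neg at hcc
      have h1 : 1 ≤ α₁ := by omega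
      interval_cases α₁ <;> norm_num at hpowmod
    -- final size contradiction
    obtain ⟨x1, hx1⟩ : ∃ x, α₁ = 38 + x := ⟨α₁ - 38, by omega⟩
    obtain ⟨b2, hb2'⟩ : ∃ x, α₂ = 2 + x := ⟨α₂ - 2, by omega⟩
    obtain ⟨c2, hc2'⟩ : ∃ x, α₃ = 2 + x := ⟨α₃ - 2, by omega⟩
    obtain ⟨e2, he2'⟩ : ∃ x, α₄ = 2 + x := ⟨α₄ - 2, by omega⟩
    have hS3b : 3 ^ x1 * (3 ^ 39 - 1) ≤ 2 * sgeo 3 α₁ := by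
      have hsp : (3 : ℕ) ^ (α₁ + 1) = 3 ^ x1 * 3 ^ 39 := by
        rw [hx1, ← pow_add]
        congr 1
        omega
      have e3' : 2 * sgeo 3 α₁ + 1 = 3 ^ x1 * 3 ^ 39 := by rw [e3, hsp]
      have hx1p : (1 : ℕ) ≤ 3 ^ x1 := Nat.one_le_pow _ _ (by norm_num)
      have hdist : 3 ^ x1 * (3 ^ 39 - 1) + 3 ^ x1 = 3 ^ x1 * 3 ^ 39 := by
        have h39 : (3 : ℕ) ^ 39 - 1 + 1 = 3 ^ 39 := by norm_num
        calc 3 ^ x1 * (3 ^ 39 - 1) + 3 ^ x1 = 3 ^ x1 * ((3 ^ 39 - 1) + 1) := by ring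
          _ = 3 ^ x1 * 3 ^ 39 := by rw [h39]
      have key : 3 ^ x1 * (3 ^ 39 - 1) + 1 ≤ 2 * sgeo 3 α₁ + 1 := by
        rw [e3', ← hdist]
        exact Nat.add_le_add_left hx1p _
      exact Nat.le_of_succ_le_succ key
    have hS11b : 11 ^ b2 * 133 ≤ sgeo 11 α₂ := by
      have h := sgeo_three_le 11 α₂ (by omega)
      have hh : α₂ - 2 = b2 := by omega
      rw [hh] at h
      norm_num at h
      exact h
    have hS13b : 13 ^ c2 * 183 ≤ sgeo 13 α₃ := by
      have h := sgeo_three_le 13 α₃ (by omega)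
      have hh : α₃ - 2 = c2 := by omega
      rw [hh] at h
      norm_num at h
      exact h
    have hS17b : 17 ^ e2 * 307 ≤ sgeo 17 α₄ := by
      have h := sgeo_three_le 17 α₄ (by omega)
      have hh : α₄ - 2 = e2 := by omega
      rw [hh] at h
      norm_num at h
      exact h
    have hLHS : 67248657 * ((3 ^ 39 - 1) * (3 ^ x1 * (11 ^ b2 * (13 ^ c2 * 17 ^ e2))))
        ≤ 18 * (sgeo 3 α₁ * sgeo 11 α₂ * sgeo 13 α₃ * sgeo 17 α₄) := by
      calc 67248657 * ((3 ^ 39 - 1) * (3 ^ x1 * (11 ^ b2 * (13 ^ c2 * 17 ^ e2))))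
          = 9 * ((3 ^ x1 * (3 ^ 39 - 1)) * ((11 ^ b2 * 133) * ((13 ^ c2 * 183) * (17 ^ e2 * 307)))) := by
            ring
        _ ≤ 9 * ((2 * sgeo 3 α₁) * (sgeo 11 α₂ * (sgeo 13 α₃ * sgeo 17 α₄))) :=
            Nat.mul_le_mul (le_refl 9)
              (Nat.mul_le_mul hS3b (Nat.mul_le_mul hS11b (Nat.mul_le_mul hS13b hS17b)))
        _ = 18 * (sgeo 3 α₁ * sgeo 11 α₂ * sgeo 13 α₃ * sgeo 17 α₄) := by ring
    have hRHS : 18 * (sgeo 3 α₁ * sgeo 11 α₂ * sgeo 13 α₃ * sgeo 17 α₄)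
        = 200931874 * (3 ^ 38 * (3 ^ x1 * (11 ^ b2 * (13 ^ c2 * 17 ^ e2)))) := by
      calc 18 * (sgeo 3 α₁ * sgeo 11 α₂ * sgeo 13 α₃ * sgeo 17 α₄)
          = 2 * (9 * ArithmeticFunction.sigma 1 n) := by rw [hσdec]; ring
        _ = 2 * (17 * n) := by rw [heq9]
        _ = 34 * n := by ring
        _ = 34 * (3 ^ α₁ * 11 ^ α₂ * 13 ^ α₃ * 17 ^ α₄) := by rw [hn]
        _ = 200931874 * (3 ^ 38 * (3 ^ x1 * (11 ^ b2 * (13 ^ c2 * 17 ^ e2)))) := by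
            rw [hx1, hb2', hc2', he2']
            rw [pow_add, pow_add, pow_add, pow_add]
            norm_num
            ring
    have hnum : (200931874 : ℕ) * 3 ^ 38 < 67248657 * (3 ^ 39 - 1) := by norm_num
    have hWpos : 0 < 3 ^ x1 * (11 ^ b2 * (13 ^ c2 * 17 ^ e2)) := by positivity
    have hfinal : 200931874 * (3 ^ 38 * (3 ^ x1 * (11 ^ b2 * (13 ^ c2 * 17 ^ e2))))
        < 67248657 * ((3 ^ 39 - 1) * (3 ^ x1 * (11 ^ b2 * (13 ^ c2 * 17 ^ e2)))) := by
      have h' := Nat.mul_lt_mul_of_pos_right hnum hWpos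
      calc 200931874 * (3 ^ 38 * (3 ^ x1 * (11 ^ b2 * (13 ^ c2 * 17 ^ e2))))
          = (200931874 * 3 ^ 38) * (3 ^ x1 * (11 ^ b2 * (13 ^ c2 * 17 ^ e2))) := by ring
        _ < (67248657 * (3 ^ 39 - 1)) * (3 ^ x1 * (11 ^ b2 * (13 ^ c2 * 17 ^ e2))) := h'
        _ = 67248657 * ((3 ^ 39 - 1) * (3 ^ x1 * (11 ^ b2 * (13 ^ c2 * 17 ^ e2)))) := by ring
    rw [hRHS] at hLHS
    exact lt_irrefl _ (lt_of_lt_of_le hfinal hLHS)
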